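/- Normalization of the rank-one heat kernel: for λ > 0, t > 0 and x ≥ 0, ∫_0^∞ Γ(t,x,y) dμ_λ(y) = 1, where Γ(t,x,y) = (2t)^{−λ} e^{−(x+y)/t} Γ(λ) Ĩ_{λ−1}(2√(xy)/t) and dμ_λ(y) = (2^λ/Γ(λ)) y^{λ−1} dy. -/

import Mathlib

/-!
Against `μ_λ`, the kernel is a Poisson mixture of Gamma densities: since `(2t)^{-λ} 2^λ = t^{-λ}`
and `e^{-(x+y)/t} = e^{-x/t} e^{-y/t}`, the `n`-th term of the Bessel series times the density
of `μ_λ` is `e^{-x/t} (x/t)^n / n!` times the Gamma`(n + λ, 1/t)` density in `y`. Each Gamma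
density integrates to one, the Poisson weights sum to one, and as all terms are nonnegative the
series may be integrated term by term.
-/

/-- `B(w) = Γ(λ) Ĩ_{λ−1}(2√w) = Γ(λ) ∑ₙ wⁿ/(Γ(n+λ) n!)`. -/
noncomputable def Bfun (l : ℝ) (w : ℝ) : ℝ :=
  Real.Gamma l * ∑' n : ℕ, w ^ n / (Real.Gamma ((n : ℝ) + l) * (n.factorial : ℝ))

/-- The rank-one Laguerre heat kernel
`Γ(t,x,y) = (2t)^{−λ} e^{−(x+y)/t} Γ(λ) Ĩ_{λ−1}(2√(xy)/t)`. -/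
noncomputable def heatKer (l t x y : ℝ) : ℝ :=
  (2 * t) ^ (-l) * Real.exp (-(x + y) / t) * Bfun l (x * y / t ^ 2)

open MeasureTheory ProbabilityTheory Real Set

lemma setIntegral_Ioi_gammaPDFReal {a r : ℝ} (ha : 0 < a) (hr : 0 < r) :
    ∫ y in Ioi 0, gammaPDFReal a r y = 1 := by
  unfold gammaPDFReal
  rw [setIntegral_congr_fun measurableSet_Ioi fun y (hy : 0 < y) => if_pos hy.le]
  simp_rw [mul_assoc]
  rw [integral_const_mul, integral_rpow_mul_exp_neg_mul_Ioi ha hr, one_div, inv_rpow hr.le]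
  field_simp [(Gamma_pos_of_pos ha).ne', (rpow_pos_of_pos hr a).ne']

lemma integral_tsum_mul_eq_one {α ι : Type*} [MeasurableSpace α] [Countable ι] {μ : Measure α}
    {p : ι → ℝ} {f : ι → α → ℝ} (hp : HasSum p 1) (hp0 : ∀ i, 0 ≤ p i)
    (hf0 : ∀ i, 0 ≤ᵐ[μ] f i) (hf1 : ∀ i, ∫ a, f i a ∂μ = 1) :
    ∫ a, ∑' i, p i * f i a ∂μ = 1 := by
  have hf : ∀ i, Integrable (f i) μ := fun i => .of_integral_ne_zero (by simp [hf1 i])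
  have hnorm : ∀ i, ∫ a, ‖p i * f i a‖ ∂μ = p i := fun i => calc
    ∫ a, ‖p i * f i a‖ ∂μ = ∫ a, p i * f i a ∂μ :=
      integral_congr_ae ((hf0 i).mono fun a ha => norm_of_nonneg (mul_nonneg (hp0 i) ha))
    _ = p i := by rw [integral_const_mul, hf1, mul_one]
  rw [← integral_tsum_of_summable_integral_norm (fun i => (hf i).const_mul (p i))
    (by simpa only [hnorm] using hp.summable)]
  simp only [integral_const_mul, hf1, mul_one, hp.tsum_eq]

lemma hasSum_exp_neg_mul_pow_div_factorial {r : ℝ} (hr : 0 ≤ r) :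
    HasSum (fun n : ℕ => exp (-r) * r ^ n / n.factorial) 1 := by
  simpa [Real.coe_toNNReal _ hr] using hasSum_one_poissonMeasure r.toNNReal

lemma heatKer_mul_density_eq_tsum {l t x y : ℝ} (hl : 0 < l) (ht : 0 < t) (hy : 0 < y) :
    heatKer l t x y * ((2 ^ l / Gamma l) * y ^ (l - 1)) =
      ∑' n : ℕ, exp (-(x / t)) * (x / t) ^ n / n.factorial *
        gammaPDFReal (n + l) t⁻¹ y := by
  rw [heatKer, Bfun, ← tsum_mul_left, ← tsum_mul_left, ← tsum_mul_right]
  refine tsum_congr fun n => ?_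
  have hscale : (2 * t) ^ (-l) * 2 ^ l = t⁻¹ ^ l := by
    rw [mul_rpow zero_le_two ht.le, rpow_neg ht.le, rpow_neg zero_le_two, inv_rpow ht.le]
    field_simp
  have hrate : t⁻¹ ^ ((n : ℝ) + l) = t⁻¹ ^ n * t⁻¹ ^ l := by
    rw [rpow_add (inv_pos.2 ht), rpow_natCast]
  have hpow : y ^ ((n : ℝ) + l - 1) = y ^ n * y ^ (l - 1) := by
    rw [add_sub_assoc, rpow_add hy, rpow_natCast]
  have hexp : exp (-(x + y) / t) = exp (-(x / t)) * exp (-(t⁻¹ * y)) := by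
    rw [← exp_add]; ring_nf
  rw [gammaPDFReal, if_pos hy.le, hrate, hpow, hexp, ← hscale]
  field_simp [(Gamma_pos_of_pos hl).ne']
  ring

/-- Normalization of the rank-one heat kernel: for `λ > 0`, `t > 0`, `x ≥ 0`,
`∫_0^∞ Γ(t,x,y) dμ_λ(y) = 1` where `dμ_λ(y) = (2^λ/Γ(λ)) y^{λ−1} dy`. -/
theorem stmt_18 (l : ℝ) (hl : 0 < l) (t x : ℝ) (ht : 0 < t) (hx : 0 ≤ x) :
    ∫ y in Set.Ioi (0 : ℝ),
        heatKer l t x y * ((2 ^ l / Real.Gamma l) * y ^ (l - 1)) = 1 := by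
  have hpos : ∀ n : ℕ, 0 < (n : ℝ) + l := fun n => by positivity
  rw [setIntegral_congr_fun measurableSet_Ioi fun y hy => heatKer_mul_density_eq_tsum hl ht hy]
  exact integral_tsum_mul_eq_one (hasSum_exp_neg_mul_pow_div_factorial (by positivity))
    (fun n => by positivity)
    (fun n => ae_of_all _ (gammaPDFReal_nonneg (hpos n) (inv_pos.2 ht)))
    (fun n => setIntegral_Ioi_gammaPDFReal (hpos n) (inv_pos.2 ht))
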